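/- arXiv:1509.04327 — 3 statements merged into one kernel-verified Lean document; each statement's English description precedes it below -/
import Mathlib

section
/- If L is a list assignment on the complete graph K_n with |L(v)| = k ≥ n for every vertex v, then the number of equivalence classes of distinguishing L-colorings of K_n is at least C(k, n). -/
/-!
Choosing colors greedily vertex by vertex gives at least `k (k - 1) ⋯ (k - n + 1)` injective
`L`-colorings, and injective colorings are distinguishing. Equivalent colorings differ by an
automorphism, so a class contains at most `|Aut K_n| = n!` colorings, whence at least
`k (k - 1) ⋯ (k - n + 1) / n! = C(k, n)` classes.
-/

def IsDistinguishing {V α : Type*} (G : SimpleGraph V) (c : V → α) : Prop :=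
  ∀ φ : G ≃g G, (∀ v, c (φ v) = c v) → ∀ v, φ v = v

noncomputable def distNumber {V : Type*} (G : SimpleGraph V) : ℕ :=
  sInf {k | ∃ c : V → Fin k, IsDistinguishing G c}

noncomputable def listDistNumber {V : Type*} (G : SimpleGraph V) : ℕ :=
  sInf {k | ∀ L : V → Finset ℕ, (∀ v, (L v).card = k) →
    ∃ c : V → ℕ, (∀ v, c v ∈ L v) ∧ IsDistinguishing G c}

def colorSetoid {V α : Type*} (G : SimpleGraph V) (P : (V → α) → Prop) :
    Setoid {c : V → α // P c} where
  r c c' := ∃ φ : G ≃g G, ∀ v, c.1 v = c'.1 (φ v)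
  iseqv := by
    refine ⟨fun c => ⟨SimpleGraph.Iso.refl, fun v => rfl⟩, ?_, ?_⟩
    · rintro c c' ⟨φ, h⟩
      exact ⟨φ.symm, fun v => by rw [h (φ.symm v), RelIso.apply_symm_apply]⟩
    · rintro c c' c'' ⟨φ, h⟩ ⟨ψ, h'⟩
      exact ⟨φ.trans ψ, fun v => by rw [h v, h' (φ v)]; rfl⟩

noncomputable def numDistClasses {V : Type*} (G : SimpleGraph V) (k : ℕ) : ℕ :=
  Nat.card (Quotient (colorSetoid (α := Fin k) G (fun c => IsDistinguishing G c)))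

noncomputable def numDistListClasses {V : Type*} (G : SimpleGraph V) (L : V → Finset ℕ) : ℕ :=
  Nat.card (Quotient (colorSetoid (α := ℕ) G
    (fun c => (∀ v, c v ∈ L v) ∧ IsDistinguishing G c)))

open Finset Function
open scoped Nat

section InjectiveColorings

variable {α : Type*} [DecidableEq α]

lemma sum_card_injective_piFinset_erase_le {n : ℕ} (L : Fin (n + 1) → Finset α) :
    ∑ a ∈ L 0, #{c ∈ Fintype.piFinset (fun i : Fin n ↦ (L i.succ).erase a) | Injective c} ≤
      #{c ∈ Fintype.piFinset L | Injective c} := by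
  rw [← Finset.card_sigma]
  refine card_le_card_of_injOn (fun x ↦ Fin.cons x.1 x.2) ?_ ?_
  · rintro ⟨a, c⟩ hac
    simp only [coe_sigma, Set.mem_sigma_iff, mem_coe, mem_filter, Fintype.mem_piFinset] at hac ⊢
    obtain ⟨ha, hc, hinj⟩ := hac
    refine ⟨Fin.cases ha fun i ↦ mem_of_mem_erase (hc i), Fin.cons_injective_iff.2 ⟨?_, hinj⟩⟩
    rintro ⟨i, rfl⟩
    exact notMem_erase _ _ (hc i)
  · rintro ⟨a, c⟩ - ⟨b, d⟩ - h
    obtain ⟨rfl, rfl⟩ := Fin.cons_inj.1 h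
    rfl

lemma descFactorial_le_card_injective_piFinset :
    ∀ {n m : ℕ} (L : Fin n → Finset α), (∀ i, m ≤ #(L i)) →
      m.descFactorial n ≤ #{c ∈ Fintype.piFinset L | Injective c}
  | 0, m, L, _ => by
    rw [Nat.descFactorial_zero, Nat.one_le_iff_ne_zero, ← pos_iff_ne_zero, Finset.card_pos]
    exact ⟨finZeroElim,
      mem_filter.2 ⟨Fintype.mem_piFinset.2 finZeroElim, injective_of_subsingleton _⟩⟩
  | n + 1, 0, L, _ => by simp
  | n + 1, m + 1, L, hL => calc
      (m + 1).descFactorial (n + 1) ≤ #(L 0) * m.descFactorial n := by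
        rw [Nat.succ_descFactorial_succ]
        exact Nat.mul_le_mul_right _ (hL 0)
      _ = ∑ _a ∈ L 0, m.descFactorial n := by rw [sum_const, smul_eq_mul]
      _ ≤ ∑ a ∈ L 0, #{c ∈ Fintype.piFinset (fun i ↦ (L i.succ).erase a) | Injective c} :=
        sum_le_sum fun a _ ↦ descFactorial_le_card_injective_piFinset _ fun i ↦ by
          have := hL i.succ
          have := pred_card_le_card_erase (s := L i.succ) (a := a)
          omega
      _ ≤ #{c ∈ Fintype.piFinset L | Injective c} := sum_card_injective_piFinset_erase_le L

end InjectiveColorings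

lemma isDistinguishing_of_injective {V α : Type*} (G : SimpleGraph V) {c : V → α}
    (hc : Injective c) : IsDistinguishing G c :=
  fun _ hσ v ↦ hc (hσ v)

lemma natCard_iso_self_le_factorial {V : Type*} [Finite V] (G : SimpleGraph V) :
    Nat.card (G ≃g G) ≤ (Nat.card V)! := by
  rw [← Nat.card_perm]
  exact Nat.card_le_card_of_injective _ RelIso.toEquiv_injective

lemma natCard_le_natCard_quotient_mul_natCard_iso {V α : Type*} [Finite V]
    (G : SimpleGraph V) (P : (V → α) → Prop) [Finite {c // P c}] :
    Nat.card {c // P c} ≤ Nat.card (Quotient (colorSetoid G P)) * Nat.card (G ≃g G) := by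
  have : Finite (G ≃g G) := Finite.of_injective _ RelIso.toEquiv_injective
  -- `c` is recovered from its class and an automorphism carrying `c` to the class representative
  choose σ hσ using fun c : {c // P c} ↦ Quotient.mk_out (s := colorSetoid G P) c
  rw [← Nat.card_prod]
  refine Nat.card_le_card_of_injective (fun c ↦ (⟦c⟧, σ c)) fun c d hcd ↦ ?_
  obtain ⟨hcls, hσ_eq⟩ := Prod.mk.inj hcd
  have hc := hσ c
  have hd := hσ d
  rw [hcls, hσ_eq] at hc
  refine Subtype.ext <| funext fun v ↦ ?_
  simpa using (hc ((σ d).symm v)).symm.trans (hd _)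

instance finite_distinguishingListColorings {V α : Type*} [Finite V] (G : SimpleGraph V)
    (L : V → Finset α) :
    Finite {c : V → α // (∀ v, c v ∈ L v) ∧ IsDistinguishing G c} :=
  Finite.of_injective (fun c v ↦ (⟨c.1 v, c.2.1 v⟩ : L v)) fun _ _ hcd ↦
    Subtype.ext <| funext fun v ↦ congrArg Subtype.val (congrFun hcd v)

lemma descFactorial_le_natCard_distinguishingListColorings {α : Type*} [DecidableEq α] {n m : ℕ}
    (G : SimpleGraph (Fin n)) (L : Fin n → Finset α) (hL : ∀ v, m ≤ #(L v)) :
    m.descFactorial n ≤ Nat.card {c // (∀ v, c v ∈ L v) ∧ IsDistinguishing G c} := calc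
  m.descFactorial n ≤ #{c ∈ Fintype.piFinset L | Injective c} :=
    descFactorial_le_card_injective_piFinset L hL
  _ = Nat.card {c // c ∈ ({c ∈ Fintype.piFinset L | Injective c} : Finset _)} :=
    (Nat.card_eq_fintype_card.trans (Fintype.card_coe _)).symm
  _ ≤ _ := by
    refine Nat.card_le_card_of_injective (fun c ↦ ⟨c.1, ?_⟩) fun _ _ hcd ↦ ?_
    · obtain ⟨hcL, hc⟩ := mem_filter.1 c.2
      exact ⟨Fintype.mem_piFinset.1 hcL, isDistinguishing_of_injective G hc⟩
    · exact Subtype.ext (by simpa using congrArg Subtype.val hcd)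

theorem numDistListClasses_top_ge_general (n k : ℕ) (L : Fin n → Finset ℕ)
    (hL : ∀ v, (L v).card = k) :
    k.choose n ≤ numDistListClasses (⊤ : SimpleGraph (Fin n)) L := by
  refine Nat.le_of_mul_le_mul_right ?_ n.factorial_pos
  calc k.choose n * n ! = k.descFactorial n := by
        rw [Nat.descFactorial_eq_factorial_mul_choose, mul_comm]
    _ ≤ Nat.card {c // (∀ v, c v ∈ L v) ∧ IsDistinguishing (⊤ : SimpleGraph (Fin n)) c} :=
      descFactorial_le_natCard_distinguishingListColorings _ L fun v ↦ (hL v).ge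
    _ ≤ numDistListClasses ⊤ L * Nat.card ((⊤ : SimpleGraph (Fin n)) ≃g ⊤) :=
      natCard_le_natCard_quotient_mul_natCard_iso _ _
    _ ≤ numDistListClasses ⊤ L * n ! := by
      simpa using Nat.mul_le_mul_left _ (natCard_iso_self_le_factorial (⊤ : SimpleGraph (Fin n)))

/-- If `L` is a list assignment on `K_n` with all lists of size `k ≥ n`, then the number
of equivalence classes of distinguishing `L`-colorings of `K_n` is at least `C(k, n)`. -/
theorem numDistListClasses_top_ge (n k : ℕ) (hkn : n ≤ k) (L : Fin n → Finset ℕ)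
    (hL : ∀ v, (L v).card = k) :
    k.choose n ≤ numDistListClasses (⊤ : SimpleGraph (Fin n)) L :=
  numDistListClasses_top_ge_general n k L hL
end

section
/- A graph G is an interval graph if and only if there exists a linear ordering of the maximal cliques of G such that for every vertex v, the maximal cliques containing v appear consecutively in the ordering. -/
/-- `G` is an interval graph: the vertices can be assigned closed real intervals so that
two distinct vertices are adjacent iff their intervals intersect. -/
def IsIntervalGraph {V : Type*} (G : SimpleGraph V) : Prop :=
  ∃ a b : V → ℝ, ∀ u v : V,
    G.Adj u v ↔ u ≠ v ∧ (Set.Icc (a u) (b u) ∩ Set.Icc (a v) (b v)).Nonempty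

/-- `s` is a maximal clique of `G`. -/
def IsMaximalClique {V : Type*} (G : SimpleGraph V) (s : Set V) : Prop :=
  G.IsClique s ∧ ∀ t : Set V, G.IsClique t → s ⊆ t → s = t

/-!
Intervals on a line that pairwise meet have a common point. Hence a maximal clique `s` of an
interval graph is exactly the set of vertices whose interval contains some point `x s`, and
distinct maximal cliques have distinct points. Ordering the maximal cliques by these points, a
vertex lies in precisely the cliques whose point falls in its interval, which are consecutive.
(Empty intervals, which belong to isolated vertices, are first replaced by distinct fresh points.)

Conversely, given a consecutive ordering, give each vertex the interval from the first to the
last index of a maximal clique containing it. Two such intervals meet iff some maximal clique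
contains both vertices, i.e. iff the vertices are adjacent.
-/

open Set

def IsIntervalModel {V : Type*} (G : SimpleGraph V) (a b : V → ℝ) : Prop :=
  ∀ u v : V, G.Adj u v ↔ u ≠ v ∧ (Icc (a u) (b u) ∩ Icc (a v) (b v)).Nonempty

def IsConsecutiveCliqueOrder {V : Type*} (G : SimpleGraph V) {m : ℕ}
    (f : Fin m ≃ {s : Set V // IsMaximalClique G s}) : Prop :=
  ∀ (v : V) (i j l : Fin m), i ≤ j → j ≤ l → v ∈ (f i).1 → v ∈ (f l).1 → v ∈ (f j).1

theorem Set.Finite.exists_forall_mem_Icc {ι α : Type*} [LinearOrder α] {s : Set ι}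
    (hs : s.Finite) (hne : s.Nonempty) {a b : ι → α} (hab : ∀ i ∈ s, ∀ j ∈ s, a i ≤ b j) :
    ∃ x, ∀ i ∈ s, x ∈ Icc (a i) (b i) := by
  obtain ⟨k, hk, hmax⟩ := s.exists_max_image a hs hne
  exact ⟨a k, fun i hi => ⟨hmax i hi, hab k hk i hi⟩⟩

theorem exists_equiv_fin_monotone {K β : Type*} [Finite K] [LinearOrder β] {p : K → β}
    (hp : Function.Injective p) : ∃ (m : ℕ) (f : Fin m ≃ K), Monotone (p ∘ f) := by
  have := Fintype.ofFinite K
  let : LinearOrder K := LinearOrder.lift' p hp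
  exact ⟨_, (monoEquivOfFin K rfl).toEquiv, (monoEquivOfFin K rfl).monotone⟩

theorem Set.nonempty_Icc_inter_Icc_comp_iff {α β : Type*} [LinearOrder α] [LinearOrder β]
    {e : α → β} (he : StrictMono e) {a₁ b₁ a₂ b₂ : α} :
    (Icc (e a₁) (e b₁) ∩ Icc (e a₂) (e b₂)).Nonempty ↔ (Icc a₁ b₁ ∩ Icc a₂ b₂).Nonempty := by
  simp [Icc_inter_Icc, he.le_iff_le]

theorem exists_isMaximalClique_superset {V : Type*} [Finite V] {G : SimpleGraph V} {s : Set V}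
    (hs : G.IsClique s) : ∃ t, IsMaximalClique G t ∧ s ⊆ t := by
  obtain ⟨t, hst, ht⟩ := Finite.exists_le_maximal hs
  exact ⟨t, ⟨ht.1, fun u hu htu => htu.antisymm (ht.2 hu htu)⟩, hst⟩

namespace IsIntervalModel

variable {V : Type*} {G : SimpleGraph V} {a b : V → ℝ}

theorem exists_nonempty_intervals [Finite V] (h : IsIntervalModel G a b) :
    ∃ a' b' : V → ℝ, (∀ v, a' v ≤ b' v) ∧ IsIntervalModel G a' b' := by
  have := Fintype.ofFinite V
  -- the empty intervals become distinct points to the right of all the others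
  set c : V → ℝ := fun v => ∑ w, |b w| + 1 + (Fintype.equivFin V v : ℕ)
  have hbc : ∀ u v, b u < c v := fun u v => by
    have := (le_abs_self (b u)).trans (Finset.single_le_sum (fun w _ => abs_nonneg (b w))
      (Finset.mem_univ u))
    have : (0 : ℝ) ≤ (Fintype.equivFin V v : ℕ) := Nat.cast_nonneg _
    linarith
  have hc : Function.Injective c := fun u v huv => by
    simpa [c, Fin.val_inj] using huv
  set a' : V → ℝ := fun v => if a v ≤ b v then a v else c v
  set b' : V → ℝ := fun v => if a v ≤ b v then b v else c v
  have mem_Icc' : ∀ v x, x ∈ Icc (a' v) (b' v) ↔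
      (a v ≤ b v ∧ x ∈ Icc (a v) (b v)) ∨ (b v < a v ∧ x = c v) := fun v x => by
    by_cases hv : a v ≤ b v
    · simp [a', b', hv]
    · simp [a', b', hv, le_antisymm_iff, lt_of_not_ge hv]
  refine ⟨a', b', fun v => ?_, fun u v => (h u v).trans (and_congr_right fun hne => ?_)⟩
  · by_cases hv : a v ≤ b v <;> simp [a', b', hv]
  constructor
  · rintro ⟨x, hxu, hxv⟩
    exact ⟨x, (mem_Icc' u x).2 (.inl ⟨hxu.1.trans hxu.2, hxu⟩),
      (mem_Icc' v x).2 (.inl ⟨hxv.1.trans hxv.2, hxv⟩)⟩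
  · rintro ⟨x, hxu, hxv⟩
    rcases (mem_Icc' u x).1 hxu with ⟨-, hxu⟩ | ⟨-, hxu⟩ <;>
      rcases (mem_Icc' v x).1 hxv with ⟨-, hxv⟩ | ⟨-, hxv⟩
    · exact ⟨x, hxu, hxv⟩
    · exact absurd (hxv ▸ hxu.2) (hbc u v).not_ge
    · exact absurd (hxu ▸ hxv.2) (hbc v u).not_ge
    · exact absurd (hc (hxu.symm.trans hxv)) hne

theorem isClique_setOf_mem_Icc (h : IsIntervalModel G a b) (x : ℝ) :
    G.IsClique {v | x ∈ Icc (a v) (b v)} :=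
  fun u hu v hv huv => (h u v).2 ⟨huv, x, hu, hv⟩

theorem exists_forall_mem_Icc [Finite V] (h : IsIntervalModel G a b) (hab : ∀ v, a v ≤ b v)
    {s : Set V} (hs : G.IsClique s) : ∃ x, ∀ v ∈ s, x ∈ Icc (a v) (b v) := by
  rcases s.eq_empty_or_nonempty with rfl | hne
  · exact ⟨0, fun _ => False.elim⟩
  refine s.toFinite.exists_forall_mem_Icc hne fun u hu v hv => ?_
  obtain rfl | huv := eq_or_ne u v
  · exact hab u
  obtain ⟨-, y, hyu, hyv⟩ := (h u v).1 (hs hu hv huv)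
  exact hyu.1.trans hyv.2

theorem exists_eq_setOf_mem_Icc [Finite V] (h : IsIntervalModel G a b) (hab : ∀ v, a v ≤ b v)
    {s : Set V} (hs : IsMaximalClique G s) : ∃ x, s = {v | x ∈ Icc (a v) (b v)} :=
  (h.exists_forall_mem_Icc hab hs.1).imp fun x hx => hs.2 _ (h.isClique_setOf_mem_Icc x) hx

theorem exists_isConsecutiveCliqueOrder [Finite V] (h : IsIntervalModel G a b)
    (hab : ∀ v, a v ≤ b v) :
    ∃ (m : ℕ) (f : Fin m ≃ {s : Set V // IsMaximalClique G s}), IsConsecutiveCliqueOrder G f := by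
  choose p hp using fun s : {s : Set V // IsMaximalClique G s} => h.exists_eq_setOf_mem_Icc hab s.2
  have hp_inj : Function.Injective p := fun s t hst => Subtype.ext ((hp s).trans (hst ▸ hp t).symm)
  obtain ⟨m, f, hf⟩ := exists_equiv_fin_monotone hp_inj
  refine ⟨m, f, fun v i j l hij hjl hvi hvl => ?_⟩
  rw [hp] at hvi hvl ⊢
  exact ⟨hvi.1.trans (hf hij), (hf hjl).trans hvl.2⟩

end IsIntervalModel

theorem adj_iff_exists_isMaximalClique {V : Type*} [Finite V] {G : SimpleGraph V} {u v : V} :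
    G.Adj u v ↔ u ≠ v ∧ ∃ s, IsMaximalClique G s ∧ u ∈ s ∧ v ∈ s := by
  refine ⟨fun huv => ⟨huv.ne, ?_⟩, fun ⟨huv, s, hs, hu, hv⟩ => hs.1 hu hv huv⟩
  obtain ⟨s, hs, hsub⟩ := exists_isMaximalClique_superset (G.isClique_pair.2 fun _ => huv)
  exact ⟨s, hs, hsub (mem_insert u _), hsub (mem_insert_of_mem u rfl)⟩

namespace IsConsecutiveCliqueOrder

variable {V : Type*} [Finite V] {G : SimpleGraph V} {m : ℕ}
  {f : Fin m ≃ {s : Set V // IsMaximalClique G s}}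

theorem exists_mem_iff_mem_Icc (hf : IsConsecutiveCliqueOrder G f) (v : V) :
    ∃ i j : Fin m, ∀ k, v ∈ (f k).1 ↔ k ∈ Icc i j := by
  obtain ⟨s, hs, hvs⟩ := exists_isMaximalClique_superset (G.isClique_singleton v)
  have hne : {k | v ∈ (f k).1}.Nonempty := ⟨f.symm ⟨s, hs⟩, by simpa using hvs rfl⟩
  obtain ⟨i, hi, hi_min⟩ := Set.exists_min_image _ id (toFinite _) hne
  obtain ⟨j, hj, hj_max⟩ := Set.exists_max_image _ id (toFinite _) hne
  exact ⟨i, j, fun k => ⟨fun hk => ⟨hi_min k hk, hj_max k hk⟩,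
    fun hk => hf v i k j hk.1 hk.2 hi hj⟩⟩

theorem isIntervalGraph (hf : IsConsecutiveCliqueOrder G f) : IsIntervalGraph G := by
  choose i j hij using hf.exists_mem_iff_mem_Icc
  have hcast : StrictMono fun k : Fin m => ((k : ℕ) : ℝ) :=
    Nat.strictMono_cast.comp Fin.val_strictMono
  refine ⟨fun v => i v, fun v => j v, fun u v => ?_⟩
  rw [adj_iff_exists_isMaximalClique, Set.nonempty_Icc_inter_Icc_comp_iff hcast]
  simp only [Set.Nonempty, mem_inter_iff, ← hij, Subtype.exists, exists_prop,
    ← f.surjective.exists (p := fun s => u ∈ s.1 ∧ v ∈ s.1)]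

end IsConsecutiveCliqueOrder

/-- Fulkerson–Gross: a finite graph is an interval graph iff its maximal cliques can be
linearly ordered so that the maximal cliques containing any given vertex are consecutive. -/
theorem isIntervalGraph_iff_consecutive_cliques {V : Type*} [Fintype V] (G : SimpleGraph V) :
    IsIntervalGraph G ↔
      ∃ (m : ℕ) (f : Fin m ≃ {s : Set V // IsMaximalClique G s}),
        ∀ (v : V) (i j l : Fin m), i ≤ j → j ≤ l →
          v ∈ (f i).1 → v ∈ (f l).1 → v ∈ (f j).1 := by
  refine ⟨fun ⟨a, b, h⟩ => ?_, fun ⟨_, _, hf⟩ => IsConsecutiveCliqueOrder.isIntervalGraph hf⟩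
  obtain ⟨a', b', hab, h'⟩ := IsIntervalModel.exists_nonempty_intervals h
  exact h'.exists_isConsecutiveCliqueOrder hab
end

section
/- If G is the disjoint union of m pairwise isomorphic copies of a connected graph H, then the number of equivalence classes of distinguishing k-colorings of G equals C(D(H; k), m). -/
/-- The disjoint union of `m` copies of the graph `H`, on vertex set `Fin m × W`. -/
def copies {W : Type*} (H : SimpleGraph W) (m : ℕ) : SimpleGraph (Fin m × W) where
  Adj x y := x.1 = y.1 ∧ H.Adj x.2 y.2
  symm := by constructor; rintro ⟨i, u⟩ ⟨j, v⟩ ⟨h1, h2⟩; exact ⟨h1.symm, h2.symm⟩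
  loopless := by constructor; rintro ⟨i, u⟩ ⟨-, h⟩; exact H.irrefl h

/-!
Since `H` is connected, every automorphism of `copies H m` permutes the copies and acts on each
copy by an automorphism of `H`. Hence a coloring of the copies is distinguishing exactly when its
restrictions to the copies are distinguishing and pairwise inequivalent (an automorphism swapping
two copies with equivalent restrictions would fix the coloring), and two distinguishing colorings
are equivalent exactly when their restrictions have the same set of classes. Sending a coloring to
this set is therefore a bijection onto the `m`-element sets of classes of distinguishing colorings
of `H`.
-/

open Function

theorem Equiv.exists_eq_prodShear {α α' β β' : Type*} [Nonempty β] [Nonempty β']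
    (e : α × β ≃ α' × β') (he : ∀ a b b', (e (a, b)).1 = (e (a, b')).1)
    (he' : ∀ a b b', (e.symm (a, b)).1 = (e.symm (a, b')).1) :
    ∃ (σ : α ≃ α') (τ : α → β ≃ β'), e = σ.prodShear τ := by
  obtain ⟨b₀⟩ := ‹Nonempty β›
  obtain ⟨b₀'⟩ := ‹Nonempty β'›
  let σ : α ≃ α' :=
    { toFun a := (e (a, b₀)).1
      invFun a := (e.symm (a, b₀')).1
      left_inv a := by
        dsimp only; rw [he' _ b₀' (e (a, b₀)).2, Prod.mk.eta, symm_apply_apply]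
      right_inv a := by
        dsimp only; rw [he _ b₀ (e.symm (a, b₀')).2, Prod.mk.eta, apply_symm_apply] }
  have fst_apply (a b) : (e (a, b)).1 = σ a := he a b b₀
  have fst_symm_apply (a b) : (e.symm (σ a, b)).1 = a := (he' _ b b₀').trans (σ.left_inv a)
  let τ (a : α) : β ≃ β' :=
    { toFun b := (e (a, b)).2
      invFun b := (e.symm (σ a, b)).2
      left_inv b := by dsimp only; rw [← fst_apply a b, Prod.mk.eta, symm_apply_apply]
      right_inv b := by
        have h : (a, (e.symm (σ a, b)).2) = e.symm (σ a, b) :=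
          Prod.ext (fst_symm_apply a b).symm rfl
        dsimp only; rw [h, apply_symm_apply] }
  exact ⟨σ, τ, Equiv.ext fun ⟨a, b⟩ => Prod.ext (fst_apply a b) rfl⟩

theorem Function.Injective.exists_equiv_eq_comp_of_range_eq {ι β : Type*} {f g : ι → β}
    (hf : Injective f) (hg : Injective g) (h : Set.range f = Set.range g) :
    ∃ σ : ι ≃ ι, f = g ∘ σ :=
  ⟨(Equiv.ofInjective f hf).trans ((Equiv.setCongr h).trans (Equiv.ofInjective g hg).symm),
    funext fun i => by simp [Equiv.apply_ofInjective_symm]⟩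

section Copies

variable {W : Type*} {H : SimpleGraph W} {m : ℕ}

@[simp]
theorem copies_adj {x y : Fin m × W} : (copies H m).Adj x y ↔ x.1 = y.1 ∧ H.Adj x.2 y.2 :=
  Iff.rfl

def copiesIso (σ : Equiv.Perm (Fin m)) (ψ : Fin m → H ≃g H) : copies H m ≃g copies H m where
  toEquiv := σ.prodShear fun i => (ψ i).toEquiv
  map_rel_iff' {x y} := by
    rcases x with ⟨i, u⟩
    rcases y with ⟨j, v⟩
    simp only [copies_adj, Equiv.prodShear_apply, EmbeddingLike.apply_eq_iff_eq]
    constructor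
    · rintro ⟨rfl, h⟩
      exact ⟨rfl, (ψ i).map_rel_iff.1 h⟩
    · rintro ⟨rfl, h⟩
      exact ⟨rfl, (ψ i).map_rel_iff.2 h⟩

@[simp]
theorem copiesIso_apply (σ : Equiv.Perm (Fin m)) (ψ : Fin m → H ≃g H) (i : Fin m) (w : W) :
    copiesIso σ ψ (i, w) = (σ i, ψ i w) :=
  rfl

theorem copies_hom_apply_fst_eq {W' : Type*} {H' : SimpleGraph W'} {n : ℕ}
    (hH : H.Preconnected) (f : copies H m →g copies H' n) (i : Fin m) (u v : W) :
    (f (i, u)).1 = (f (i, v)).1 := by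
  obtain ⟨p⟩ := hH u v
  induction p with
  | nil => rfl
  | @cons u' v' _ hadj _ ih =>
    exact (f.map_adj (show (copies H m).Adj (i, u') (i, v') from ⟨rfl, hadj⟩)).1.trans ih

theorem exists_eq_copiesIso [Nonempty W] (hH : H.Preconnected) (φ : copies H m ≃g copies H m) :
    ∃ σ ψ, φ = copiesIso σ ψ := by
  obtain ⟨σ, τ, hστ⟩ := φ.toEquiv.exists_eq_prodShear
    (copies_hom_apply_fst_eq hH φ.toHom) (copies_hom_apply_fst_eq hH φ.symm.toHom)
  have hφ (i : Fin m) (w : W) : φ (i, w) = (σ i, τ i w) :=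
    congrFun (congrArg (⇑) hστ) (i, w)
  refine ⟨σ, fun i => ⟨τ i, fun {u v} => ?_⟩, RelIso.ext fun ⟨i, w⟩ => hφ i w⟩
  simpa [hφ] using φ.map_rel_iff (a := (i, u)) (b := (i, v))

end Copies

section Colorings

variable {W α : Type*} {H : SimpleGraph W} {m : ℕ}

theorem IsDistinguishing.curry {c : Fin m × W → α} (hc : IsDistinguishing (copies H m) c)
    (i : Fin m) : IsDistinguishing H (curry c i) := by
  intro ψ hψ v
  have hfix : ∀ x, c (copiesIso 1 (Pi.mulSingle i ψ) x) = c x := by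
    rintro ⟨j, w⟩
    rcases eq_or_ne j i with rfl | hj
    · simpa using hψ w
    · simp [hj]
  simpa using congrArg Prod.snd (hc _ hfix (i, v))

theorem IsDistinguishing.eq_of_curry_eq_comp [Nonempty W] {c : Fin m × W → α}
    (hc : IsDistinguishing (copies H m) c) {i j : Fin m} {ψ : H ≃g H}
    (hψ : ∀ w, c (i, w) = c (j, ψ w)) : i = j := by
  classical
  by_contra hij
  obtain ⟨w⟩ := ‹Nonempty W›
  let Ψ : Fin m → H ≃g H := fun l => if l = i then ψ else if l = j then ψ⁻¹ else 1
  have hfix : ∀ x, c (copiesIso (Equiv.swap i j) Ψ x) = c x := by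
    rintro ⟨l, v⟩
    by_cases hli : l = i
    · subst hli
      simpa [Ψ] using (hψ v).symm
    by_cases hlj : l = j
    · subst hlj
      simpa [Ψ, hli] using hψ (ψ⁻¹ v)
    · simp [Ψ, hli, hlj, Equiv.swap_apply_of_ne_of_ne hli hlj]
  exact hij (by simpa using (congrArg Prod.fst (hc _ hfix (i, w))).symm)

theorem isDistinguishing_copies_iff [Nonempty W] (hH : H.Preconnected) {c : Fin m × W → α} :
    IsDistinguishing (copies H m) c ↔ (∀ i, IsDistinguishing H (curry c i)) ∧
      ∀ i j (ψ : H ≃g H), (∀ w, c (i, w) = c (j, ψ w)) → i = j := by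
  refine ⟨fun hc => ⟨hc.curry, fun i j ψ => hc.eq_of_curry_eq_comp⟩, ?_⟩
  rintro ⟨hcurry, hdistinct⟩ φ hφ ⟨i, w⟩
  obtain ⟨σ, ψ, rfl⟩ := exists_eq_copiesIso hH φ
  have hφ' (i : Fin m) (w : W) : c (σ i, ψ i w) = c (i, w) := hφ (i, w)
  have hσ : σ i = i := (hdistinct i (σ i) (ψ i) fun w => (hφ' i w).symm).symm
  have hψ : ψ i w = w := hcurry i (ψ i) (fun v => by simpa [hσ] using hφ' i v) w
  simp [hσ, hψ]

end Colorings

abbrev DistColoring {V : Type*} (G : SimpleGraph V) (α : Type*) : Type _ :=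
  {c : V → α // IsDistinguishing G c}

abbrev DistClass {V : Type*} (G : SimpleGraph V) (α : Type*) : Type _ :=
  Quotient (colorSetoid G fun c : V → α => IsDistinguishing G c)

section CopyClasses

variable {W α : Type*} {H : SimpleGraph W} {m : ℕ}

def copyClass (c : DistColoring (copies H m) α) (i : Fin m) : DistClass H α :=
  ⟦⟨curry c.1 i, c.2.curry i⟩⟧

theorem copyClass_eq_copyClass_iff {c c' : DistColoring (copies H m) α} {i j : Fin m} :
    copyClass c i = copyClass c' j ↔ ∃ ψ : H ≃g H, ∀ w, c.1 (i, w) = c'.1 (j, ψ w) :=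
  Quotient.eq

variable [Nonempty W]

theorem copyClass_injective (c : DistColoring (copies H m) α) : Injective (copyClass c) :=
  fun _ _ h =>
    let ⟨_, hψ⟩ := copyClass_eq_copyClass_iff.1 h
    c.2.eq_of_curry_eq_comp hψ

def copyClasses (c : DistColoring (copies H m) α) : Set.powersetCard (DistClass H α) m :=
  ⟨Finset.univ.map ⟨copyClass c, copyClass_injective c⟩, by simp⟩

theorem coe_copyClasses (c : DistColoring (copies H m) α) :
    ((copyClasses c : Finset (DistClass H α)) : Set (DistClass H α)) =
      Set.range (copyClass c) := by
  simp [copyClasses]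

theorem copyClasses_eq_iff (hH : H.Preconnected) {c c' : DistColoring (copies H m) α} :
    copyClasses c = copyClasses c' ↔ (⟦c⟧ : DistClass (copies H m) α) = ⟦c'⟧ := by
  constructor
  · intro h
    obtain ⟨σ, hσ⟩ := (copyClass_injective c).exists_equiv_eq_comp_of_range_eq
      (copyClass_injective c') (by rw [← coe_copyClasses, ← coe_copyClasses, h])
    choose ψ hψ using fun i => copyClass_eq_copyClass_iff.1 (congrFun hσ i)
    exact Quotient.sound ⟨copiesIso σ ψ, fun ⟨i, w⟩ => hψ i w⟩
  · intro h
    obtain ⟨φ, hφ⟩ := Quotient.exact h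
    obtain ⟨σ, ψ, rfl⟩ := exists_eq_copiesIso hH φ
    have hσ (i : Fin m) : copyClass c i = copyClass c' (σ i) :=
      copyClass_eq_copyClass_iff.2 ⟨ψ i, fun w => hφ (i, w)⟩
    apply Subtype.ext; apply Finset.coe_injective
    rw [coe_copyClasses, coe_copyClasses, funext hσ]
    exact EquivLike.range_comp (copyClass c') σ

theorem exists_copyClasses_eq (hH : H.Preconnected) (s : Set.powersetCard (DistClass H α) m) :
    ∃ c, copyClasses c = s := by
  let q : Fin m ≃ (s : Finset (DistClass H α)) := (Finset.equivFinOfCardEq s.2).symm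
  let c : Fin m × W → α := fun x => (q x.1 : DistClass H α).out.1 x.2
  have hc_curry (i : Fin m) : IsDistinguishing H (curry c i) := (q i : DistClass H α).out.2
  have hc_class (i : Fin m) : (⟦⟨curry c i, hc_curry i⟩⟧ : DistClass H α) = q i :=
    Quotient.out_eq (q i : DistClass H α)
  have hc : IsDistinguishing (copies H m) c := by
    refine (isDistinguishing_copies_iff hH).2 ⟨hc_curry, fun i j ψ hψ => q.injective ?_⟩
    rw [Subtype.ext_iff, ← hc_class i, ← hc_class j]
    exact Quotient.sound ⟨ψ, hψ⟩
  have hc_copyClass : copyClass ⟨c, hc⟩ = Subtype.val ∘ q := funext hc_class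
  refine ⟨⟨c, hc⟩, Subtype.ext (Finset.coe_injective ?_)⟩
  rw [coe_copyClasses, hc_copyClass, EquivLike.range_comp, Subtype.range_coe]

noncomputable def distClassCopiesEquiv (hH : H.Preconnected) :
    DistClass (copies H m) α ≃ Set.powersetCard (DistClass H α) m :=
  Equiv.ofBijective
    (Quotient.lift copyClasses fun _ _ h => (copyClasses_eq_iff hH).2 (Quotient.sound h))
    ⟨fun x y => Quotient.inductionOn₂ x y fun _ _ h => (copyClasses_eq_iff hH).1 h,
      fun s => (exists_copyClasses_eq hH s).imp' (Quotient.mk _) fun _ hc => hc⟩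

end CopyClasses

theorem numDistClasses_copies_general {W : Type*} (H : SimpleGraph W)
    (hH : H.Connected) (m k : ℕ) :
    numDistClasses (copies H m) k = (numDistClasses H k).choose m := by
  have := hH.nonempty
  exact (Nat.card_congr (distClassCopiesEquiv hH.preconnected)).trans (Set.powersetCard.card _ _)

/-- If `G` is the disjoint union of `m` copies of a connected graph `H`, then the number of
equivalence classes of distinguishing `k`-colorings of `G` equals `C(D(H; k), m)`. -/
theorem numDistClasses_copies {W : Type*} [Fintype W] (H : SimpleGraph W)
    (hH : H.Connected) (m k : ℕ) :
    numDistClasses (copies H m) k = (numDistClasses H k).choose m :=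
  numDistClasses_copies_general H hH m k
end
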